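/- Let p ∈ (1,2) and a > 0, and let ψ : [0,1) → [0,∞) be continuously differentiable with ψ(0) = 0, ψ(y) > 0 for y ∈ (0,1), satisfying ψ'(y) + (p/(p-1)) ψ(y)^{(p-1)/p} = (p a^{2-p}/(p-1))(1-y) for all y ∈ (0,1). Then: (i) there exists y_a ∈ (0,1) such that ψ'(y_a) = 0 and ψ'(y)(y-y_a) < 0 for every y ∈ (0,1) \ {y_a} (i.e. ψ is strictly increasing on (0,y_a) and strictly decreasing on (y_a,1)); (ii) ψ(y) has a limit ℓ ≥ 0 as y → 1; (iii) ψ(y) ≥ a^{p(2-p)/(p-1)} (1-y)^{p/(p-1)} for all y ∈ (y_a,1). -/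

import Mathlib

/-!
In terms of the nullcline `g(y) = a^{p(2-p)/(p-1)} (1-y)^{p/(p-1)}` the equation reads
`ψ' = p/(p-1) · (g^{(p-1)/p} - ψ^{(p-1)/p})`, so `ψ` increases while it lies below the strictly
decreasing curve `g` and decreases while it lies above it. Starting from `ψ(0) = 0 < g(0)`, `ψ`
must reach `g`, since otherwise it would keep increasing while `g → 0`. At the first contact `y_a`
it crosses `g` and never comes back: at any contact point `ψ' = 0 > g'`. Above `g`, `ψ` is
decreasing and nonnegative, so it has a limit at `1`.
-/

open Set Filter Topology

/-- `ψ : [0,1) → [0,∞)` is continuously differentiable (with derivative `ψd`), `ψ(0) = 0`,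
and `ψ' + (p/(p-1)) ψ^{(p-1)/p} = (p a^{2-p}/(p-1))(1-y)` holds on `(0,1)`. -/
def PsiSol (p a : ℝ) (ψ ψd : ℝ → ℝ) : Prop :=
  (∀ y ∈ Set.Ico (0:ℝ) 1, HasDerivWithinAt ψ (ψd y) (Set.Ico 0 1) y) ∧
  ContinuousOn ψd (Set.Ico 0 1) ∧
  (∀ y ∈ Set.Ico (0:ℝ) 1, 0 ≤ ψ y) ∧
  ψ 0 = 0 ∧
  (∀ y ∈ Set.Ioo (0:ℝ) 1,
    ψd y + (p/(p-1)) * ψ y ^ ((p-1)/p) = (p * a ^ (2-p) / (p-1)) * (1-y))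

theorem exists_first_zero {h : ℝ → ℝ} {a b : ℝ} (hab : a ≤ b) (hh : ContinuousOn h (Icc a b))
    (ha : h a < 0) (hb : 0 ≤ h b) : ∃ c ∈ Ioc a b, h c = 0 ∧ ∀ x ∈ Ico a c, h x < 0 := by
  set S := Icc a b ∩ h ⁻¹' Ici 0
  have hS : IsClosed S := hh.preimage_isClosed_of_isClosed isClosed_Icc isClosed_Ici
  have hbdd : BddBelow S := ⟨a, fun x hx => hx.1.1⟩
  have hcS : sInf S ∈ S := hS.csInf_mem ⟨b, ⟨hab, le_rfl⟩, hb⟩ hbdd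
  have hbefore : ∀ x ∈ Ico a (sInf S), h x < 0 := fun x hx => not_le.1 fun hx0 =>
    hx.2.not_ge (csInf_le hbdd ⟨⟨hx.1, hx.2.le.trans hcS.1.2⟩, hx0⟩)
  have hac : a < sInf S := hcS.1.1.lt_of_ne fun hac => ha.not_ge (hac ▸ hcS.2)
  refine ⟨sInf S, ⟨hac, hcS.1.2⟩, le_antisymm ?_ hcS.2, hbefore⟩
  by_contra! hc
  obtain ⟨x, hx, hx0⟩ := intermediate_value_Icc hac.le
    (hh.mono (Icc_subset_Icc_right hcS.1.2)) ⟨ha.le, hc.le⟩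
  rcases hx.2.lt_or_eq with hxc | rfl
  · exact (hbefore x ⟨hx.1, hxc⟩).ne hx0
  · exact hc.ne' hx0

theorem image_lt_of_deriv_lt_deriv_boundary {f f' B B' : ℝ → ℝ} {a b : ℝ}
    (hf : ∀ x ∈ Ico a b, HasDerivAt f (f' x) x) (hB : ∀ x ∈ Ico a b, HasDerivAt B (B' x) x)
    (ha : f a ≤ B a) (bound : ∀ x ∈ Ico a b, f x = B x → f' x < B' x) :
    ∀ x ∈ Ioo a b, f x < B x := by
  intro x hx
  obtain ⟨c, hxc, hcb⟩ := exists_between hx.2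
  have hsub : Icc a c ⊆ Ico a b := Icc_subset_Ico_right hcb
  have hle : ∀ y ∈ Icc a c, f y ≤ B y := fun y hy =>
    image_le_of_deriv_right_lt_deriv_boundary'
      (fun z hz => (hf z (hsub hz)).continuousAt.continuousWithinAt)
      (fun z hz => (hf z (Ico_subset_Ico_right hcb.le hz)).hasDerivWithinAt) ha
      (fun z hz => (hB z (hsub hz)).continuousAt.continuousWithinAt)
      (fun z hz => (hB z (Ico_subset_Ico_right hcb.le hz)).hasDerivWithinAt)
      (fun z hz => bound z (Ico_subset_Ico_right hcb.le hz)) hy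
  have hxI : x ∈ Ico a b := Ioo_subset_Ico_self hx
  refine (hle x ⟨hx.1.le, hxc.le⟩).lt_of_ne fun hfx => (bound x hxI hfx).ne ?_
  -- a contact point inside `[a, c]` would be a local maximum of `f - B`
  have hmax : IsLocalMax (fun y => f y - B y) x := by
    filter_upwards [Icc_mem_nhds hx.1 hxc] with y hy
    linarith [hle y hy]
  linarith [hmax.hasDerivAt_eq_zero ((hf x hxI).sub (hB x hxI))]

theorem AntitoneOn.exists_tendsto_nhdsLT_of_nonneg {f : ℝ → ℝ} {c b : ℝ} (hcb : c < b)
    (hf : AntitoneOn f (Ioo c b)) (h0 : ∀ x ∈ Ioo c b, 0 ≤ f x) :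
    ∃ ℓ, 0 ≤ ℓ ∧ Tendsto f (𝓝[<] b) (𝓝 ℓ) := by
  have hne : (Ioo c b).Nonempty := nonempty_Ioo.2 hcb
  exact ⟨_, le_csInf (hne.image f) (forall_mem_image.2 h0),
    hf.tendsto_nhdsWithin_Ioo_left hne ⟨0, forall_mem_image.2 h0⟩⟩

noncomputable def nullcline (p a y : ℝ) : ℝ := a ^ (p * (2 - p) / (p - 1)) * (1 - y) ^ (p / (p - 1))

section nullcline

variable {p a : ℝ}

theorem nullcline_rpow (hp : 1 < p) (ha : 0 ≤ a) {y : ℝ} (hy : y ≤ 1) :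
    p / (p - 1) * nullcline p a y ^ ((p - 1) / p) = p * a ^ (2 - p) / (p - 1) * (1 - y) := by
  have hp0 : p ≠ 0 := (zero_lt_one.trans hp).ne'
  have hp1 : p - 1 ≠ 0 := sub_ne_zero.2 hp.ne'
  have h1y : 0 ≤ 1 - y := sub_nonneg.2 hy
  rw [nullcline, Real.mul_rpow (Real.rpow_nonneg ha _) (Real.rpow_nonneg h1y _),
    ← Real.rpow_mul ha, ← Real.rpow_mul h1y,
    show p * (2 - p) / (p - 1) * ((p - 1) / p) = 2 - p by field_simp,
    show p / (p - 1) * ((p - 1) / p) = 1 by field_simp, Real.rpow_one]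
  ring

theorem nullcline_nonneg (ha : 0 ≤ a) {y : ℝ} (hy : y ≤ 1) : 0 ≤ nullcline p a y :=
  mul_nonneg (Real.rpow_nonneg ha _) (Real.rpow_nonneg (sub_nonneg.2 hy) _)

theorem nullcline_pos (ha : 0 < a) {y : ℝ} (hy : y < 1) : 0 < nullcline p a y :=
  mul_pos (Real.rpow_pos_of_pos ha _) (Real.rpow_pos_of_pos (sub_pos.2 hy) _)

theorem hasDerivAt_nullcline (hp : 1 < p) (y : ℝ) :
    HasDerivAt (nullcline p a)
      (a ^ (p * (2 - p) / (p - 1)) * (-1 * (p / (p - 1)) * (1 - y) ^ (p / (p - 1) - 1))) y := by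
  have hexp : 1 ≤ p / (p - 1) := by
    rw [le_div_iff₀ (sub_pos.2 hp)]
    linarith
  exact (((hasDerivAt_id y).const_sub 1).rpow_const (Or.inr hexp)).const_mul _

theorem continuous_nullcline (hp : 1 < p) : Continuous (nullcline p a) :=
  continuous_iff_continuousAt.2 fun y => (hasDerivAt_nullcline hp y).continuousAt

theorem deriv_nullcline_neg (hp : 1 < p) (ha : 0 < a) {y : ℝ} (hy : y < 1) :
    deriv (nullcline p a) y < 0 := by
  rw [(hasDerivAt_nullcline hp y).deriv, neg_one_mul, neg_mul]
  exact mul_neg_of_pos_of_neg (Real.rpow_pos_of_pos ha _) (neg_neg_of_pos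
    (mul_pos (div_pos (by linarith) (sub_pos.2 hp)) (Real.rpow_pos_of_pos (sub_pos.2 hy) _)))

theorem tendsto_nullcline_one (hp : 1 < p) : Tendsto (nullcline p a) (𝓝[<] 1) (𝓝 0) := by
  have hexp : p / (p - 1) ≠ 0 := (div_pos (by linarith) (sub_pos.2 hp)).ne'
  have h1 : nullcline p a 1 = 0 := by simp [nullcline, Real.zero_rpow hexp]
  exact h1 ▸ (continuous_nullcline hp).continuousAt.tendsto.mono_left nhdsWithin_le_nhds

end nullcline

namespace PsiSol

variable {p a : ℝ} {ψ ψd : ℝ → ℝ} (hψ : PsiSol p a ψ ψd)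
include hψ

theorem map_zero : ψ 0 = 0 := hψ.2.2.2.1

theorem nonneg {y : ℝ} (hy : y ∈ Ico 0 1) : 0 ≤ ψ y := hψ.2.2.1 y hy

theorem hasDerivAt {y : ℝ} (hy : y ∈ Ioo 0 1) : HasDerivAt ψ (ψd y) y :=
  (hψ.1 y (Ioo_subset_Ico_self hy)).hasDerivAt (Ico_mem_nhds hy.1 hy.2)

theorem continuousOn : ContinuousOn ψ (Ico 0 1) := fun y hy => (hψ.1 y hy).continuousWithinAt

theorem deriv_eq (hp : 1 < p) (ha : 0 ≤ a) {y : ℝ} (hy : y ∈ Ioo 0 1) :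
    ψd y = p / (p - 1) * (nullcline p a y ^ ((p - 1) / p) - ψ y ^ ((p - 1) / p)) := by
  rw [mul_sub, nullcline_rpow hp ha hy.2.le, ← hψ.2.2.2.2 y hy]
  ring

theorem deriv_pos_of_lt (hp : 1 < p) (ha : 0 ≤ a) {y : ℝ} (hy : y ∈ Ioo 0 1)
    (h : ψ y < nullcline p a y) : 0 < ψd y := by
  rw [hψ.deriv_eq hp ha hy]
  exact mul_pos (div_pos (by linarith) (sub_pos.2 hp)) (sub_pos.2
    (Real.rpow_lt_rpow (hψ.nonneg (Ioo_subset_Ico_self hy)) h (div_pos (sub_pos.2 hp) (by linarith))))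

theorem deriv_neg_of_lt (hp : 1 < p) (ha : 0 ≤ a) {y : ℝ} (hy : y ∈ Ioo 0 1)
    (h : nullcline p a y < ψ y) : ψd y < 0 := by
  rw [hψ.deriv_eq hp ha hy]
  exact mul_neg_of_pos_of_neg (div_pos (by linarith) (sub_pos.2 hp)) (sub_neg.2
    (Real.rpow_lt_rpow (nullcline_nonneg ha hy.2.le) h (div_pos (sub_pos.2 hp) (by linarith))))

theorem deriv_eq_zero_of_eq (hp : 1 < p) (ha : 0 ≤ a) {y : ℝ} (hy : y ∈ Ioo 0 1)
    (h : ψ y = nullcline p a y) : ψd y = 0 := by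
  rw [hψ.deriv_eq hp ha hy, h, sub_self, mul_zero]

theorem exists_nullcline_le (hp : 1 < p) (ha : 0 ≤ a) :
    ∃ y ∈ Ioo 0 1, nullcline p a y ≤ ψ y := by
  by_contra! hbelow
  have hmono : StrictMonoOn ψ (Ico 0 1) :=
    strictMonoOn_of_deriv_pos (convex_Ico 0 1) hψ.continuousOn fun x hx => by
      rw [interior_Ico] at hx
      rw [(hψ.hasDerivAt hx).deriv]
      exact hψ.deriv_pos_of_lt hp ha hx (hbelow x hx)
  have hhalf : (1 / 2 : ℝ) ∈ Ico 0 1 := ⟨by norm_num, by norm_num⟩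
  have hpos : 0 < ψ (1 / 2) := hψ.map_zero ▸ hmono ⟨le_rfl, one_pos⟩ hhalf (by norm_num)
  obtain ⟨y, hgy, hy⟩ := (((tendsto_nullcline_one hp).eventually (gt_mem_nhds hpos)).and
    (Ioo_mem_nhdsLT (by norm_num : (1 / 2 : ℝ) < 1))).exists
  have hyI : y ∈ Ioo (0 : ℝ) 1 := ⟨(one_half_pos).trans hy.1, hy.2⟩
  exact lt_asymm (hbelow y hyI) (hgy.trans (hmono hhalf (Ioo_subset_Ico_self hyI) hy.1))

theorem exists_first_contact (hp : 1 < p) (ha : 0 < a) :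
    ∃ ya ∈ Ioo 0 1, ψ ya = nullcline p a ya ∧ ∀ y ∈ Ico 0 ya, ψ y < nullcline p a y := by
  obtain ⟨y₁, hy₁, hle⟩ := hψ.exists_nullcline_le hp ha.le
  obtain ⟨ya, hya, hzero, hbefore⟩ := exists_first_zero (h := fun y => ψ y - nullcline p a y)
    hy₁.1.le ((hψ.continuousOn.mono (Icc_subset_Ico_right hy₁.2)).sub
      (continuous_nullcline hp).continuousOn)
    (by simpa [hψ.map_zero] using nullcline_pos (p := p) ha one_pos) (sub_nonneg.2 hle)
  exact ⟨ya, ⟨hya.1, hya.2.trans_lt hy₁.2⟩, sub_eq_zero.1 hzero,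
    fun y hy => sub_neg.1 (hbefore y hy)⟩

theorem nullcline_lt_of_contact (hp : 1 < p) (ha : 0 < a) {ya : ℝ} (hya : ya ∈ Ioo 0 1)
    (hcontact : ψ ya = nullcline p a ya) : ∀ y ∈ Ioo ya 1, nullcline p a y < ψ y := by
  have hI : ∀ x ∈ Ico ya 1, x ∈ Ioo (0 : ℝ) 1 := fun x hx => ⟨hya.1.trans_le hx.1, hx.2⟩
  exact image_lt_of_deriv_lt_deriv_boundary
    (fun x _ => (hasDerivAt_nullcline hp x).differentiableAt.hasDerivAt)
    (fun x hx => hψ.hasDerivAt (hI x hx)) hcontact.ge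
    (fun x hx hx' => (deriv_nullcline_neg hp ha hx.2).trans_eq
      (hψ.deriv_eq_zero_of_eq hp ha.le (hI x hx) hx'.symm).symm)

end PsiSol

theorem stmt7_general (p a : ℝ) (hp : p ∈ Set.Ioo (1:ℝ) 2) (ha : 0 < a)
    (ψ ψd : ℝ → ℝ) (hψ : PsiSol p a ψ ψd) :
    (∃ ya ∈ Set.Ioo (0:ℝ) 1,
      ψd ya = 0 ∧
      (∀ y ∈ Set.Ioo (0:ℝ) 1, y ≠ ya → ψd y * (y - ya) < 0) ∧
      (∀ y ∈ Set.Ioo ya 1, a ^ (p*(2-p)/(p-1)) * (1-y) ^ (p/(p-1)) ≤ ψ y)) ∧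
    (∃ ℓ : ℝ, 0 ≤ ℓ ∧ Tendsto ψ (𝓝[<] (1:ℝ)) (𝓝 ℓ)) := by
  obtain ⟨hp1, -⟩ := hp
  obtain ⟨ya, hya, hcontact, hbelow⟩ := hψ.exists_first_contact hp1 ha
  have habove := hψ.nullcline_lt_of_contact hp1 ha hya hcontact
  have hI : ∀ y ∈ Ioo ya 1, y ∈ Ioo (0 : ℝ) 1 := fun y hy => ⟨hya.1.trans hy.1, hy.2⟩
  have hdecr : ∀ y ∈ Ioo ya 1, ψd y < 0 := fun y hy =>
    hψ.deriv_neg_of_lt hp1 ha.le (hI y hy) (habove y hy)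
  have hanti : StrictAntiOn ψ (Ioo ya 1) :=
    strictAntiOn_of_deriv_neg (convex_Ioo ya 1)
      (hψ.continuousOn.mono fun y hy => Ioo_subset_Ico_self (hI y hy)) fun y hy => by
        rw [interior_Ioo] at hy
        rw [(hψ.hasDerivAt (hI y hy)).deriv]
        exact hdecr y hy
  refine ⟨⟨ya, hya, hψ.deriv_eq_zero_of_eq hp1 ha.le hya hcontact, fun y hy hne => ?_,
    fun y hy => (habove y hy).le⟩, hanti.antitoneOn.exists_tendsto_nhdsLT_of_nonneg hya.2
      fun y hy => hψ.nonneg (Ioo_subset_Ico_self (hI y hy))⟩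
  rcases hne.lt_or_gt with hlt | hgt
  · exact mul_neg_of_pos_of_neg (hψ.deriv_pos_of_lt hp1 ha.le hy (hbelow y ⟨hy.1.le, hlt⟩))
      (sub_neg.2 hlt)
  · exact mul_neg_of_neg_of_pos (hdecr y ⟨hgt, hy.2⟩) (sub_pos.2 hgt)

/-- **Shape of `ψ`.** If moreover `ψ > 0` on `(0,1)`, then: (i) there is
`y_a ∈ (0,1)` with `ψ'(y_a) = 0` and `ψ'(y)(y-y_a) < 0` for `y ∈ (0,1) \ {y_a}`, and
(iii) `ψ(y) ≥ a^{p(2-p)/(p-1)} (1-y)^{p/(p-1)}` for `y ∈ (y_a,1)`; (ii) `ψ(y)` has a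
limit `ℓ ≥ 0` as `y → 1`. -/
theorem stmt7 (p a : ℝ) (hp : p ∈ Set.Ioo (1:ℝ) 2) (ha : 0 < a)
    (ψ ψd : ℝ → ℝ) (hψ : PsiSol p a ψ ψd)
    (hpos : ∀ y ∈ Set.Ioo (0:ℝ) 1, 0 < ψ y) :
    (∃ ya ∈ Set.Ioo (0:ℝ) 1,
      ψd ya = 0 ∧
      (∀ y ∈ Set.Ioo (0:ℝ) 1, y ≠ ya → ψd y * (y - ya) < 0) ∧
      (∀ y ∈ Set.Ioo ya 1, a ^ (p*(2-p)/(p-1)) * (1-y) ^ (p/(p-1)) ≤ ψ y)) ∧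
    (∃ ℓ : ℝ, 0 ≤ ℓ ∧ Tendsto ψ (𝓝[<] (1:ℝ)) (𝓝 ℓ)) :=
  stmt7_general p a hp ha ψ ψd hψ
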